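/- arXiv:math/0203064 — 3 statements merged into one kernel-verified Lean document; each statement's English description precedes it below -/
import Mathlib

section
/- Let D ⊂ ℂ be a domain, let {a_j}_{j≥1} be distinct points of ∂D, fix n ∈ ℕ, and let B_n = {z ∈ D : dist(z, ∂D) = |z − a_n|}. Assume B_n ≠ ∅, a_n ∈ closure(B_n), and let {c_j} be complex numbers with c_n ≠ 0 and Σ_{j≠n} |c_j| / dist(a_j, B_n) < ∞ (where dist(a_j, B_n) > 0 for all j ≠ n). Then the series f(z) = Σ_{j=1}^∞ c_j/(z − a_j) converges for z ∈ B_n and liminf_{B_n ∋ z → a_n} |(z − a_n) f(z)| ≥ |c_n| > 0. -/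
open Complex Metric MeasureTheory Filter Set

/-- The circle mean of an `EReal`-valued function `u` over the circle of
center `z` and radius `r`, defined as the decreasing limit of the means of
the truncations `max u (-n)`. -/
noncomputable def circleMeanE (u : ℂ → EReal) (z : ℂ) (r : ℝ) : EReal :=
  ⨅ n : ℕ, (((1 / (2 * Real.pi)) * ∫ θ in (0:ℝ)..(2 * Real.pi),
    (max (u (z + r * Complex.exp (θ * Complex.I))) ((-(n:ℝ) : ℝ) : EReal)).toReal : ℝ) : EReal)

/-- `u` is subharmonic on `U`: upper semicontinuous and satisfying the
sub-mean value inequality on every closed disc contained in `U`. -/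
def SubharmonicOn (u : ℂ → EReal) (U : Set ℂ) : Prop :=
  UpperSemicontinuousOn u U ∧
  ∀ z ∈ U, ∀ r : ℝ, 0 < r → closedBall z r ⊆ U → u z ≤ circleMeanE u z r

/-- `u` is plurisubharmonic on `Ω`: upper semicontinuous, not identically
`-∞` on any connected component, and subharmonic on every complex line. -/
def PlurisubharmonicOn {E : Type*} [NormedAddCommGroup E] [NormedSpace ℂ E]
    (u : E → EReal) (Ω : Set E) : Prop :=
  UpperSemicontinuousOn u Ω ∧
  (∀ z ∈ Ω, ∃ w ∈ connectedComponentIn Ω z, u w ≠ ⊥) ∧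
  ∀ a b : E, SubharmonicOn (fun t : ℂ => u (a + t • b)) {t : ℂ | a + t • b ∈ Ω}

/-- `S` is complete pluripolar in `Ω` if there is a plurisubharmonic function
on `Ω` whose `-∞`-set is exactly `S`. -/
def CompletePluripolarIn {E : Type*} [NormedAddCommGroup E] [NormedSpace ℂ E]
    (S Ω : Set E) : Prop :=
  ∃ u : E → EReal, PlurisubharmonicOn u Ω ∧ {z ∈ Ω | u z = ⊥} = S

/-- The pluripolar hull of `K` in `Ω`. -/
def pluripolarHull {E : Type*} [NormedAddCommGroup E] [NormedSpace ℂ E]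
    (K Ω : Set E) : Set E :=
  {z ∈ Ω | ∀ u : E → EReal, PlurisubharmonicOn u Ω → (∀ w ∈ K, u w = ⊥) → u z = ⊥}

/-- Harmonic measure of `S ⊆ ∂G` for the domain `G` at the point `z`,
via the Perron method. -/
noncomputable def harmonicMeasure (z : ℂ) (S G : Set ℂ) : EReal :=
  sSup {t : EReal | ∃ v : ℂ → EReal, SubharmonicOn v G ∧ (∀ w ∈ G, v w ≤ 0) ∧
    (∀ ζ ∈ frontier G \ S, Filter.limsup v (nhdsWithin ζ G) ≤ -1) ∧ t = v z} + 1

/-- `f`, holomorphic on `D`, extends holomorphically across the boundary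
point `b` if there are an open neighborhood `V` of `b` and a holomorphic `g`
on `V` agreeing with `f` on some connected component of `V ∩ D`. -/
def ExtendsAcross (f : ℂ → ℂ) (D : Set ℂ) (b : ℂ) : Prop :=
  ∃ V : Set ℂ, IsOpen V ∧ b ∈ V ∧ ∃ g : ℂ → ℂ, DifferentiableOn ℂ g V ∧
    ∃ z ∈ V ∩ D, Set.EqOn f g (connectedComponentIn (V ∩ D) z)

/-- The radius of convergence of the power series with coefficients `d`. -/
noncomputable def radiusOfConvergence (d : ℕ → ℂ) : ENNReal :=
  ⨆ (r : NNReal) (_ : ∃ C : ℝ, ∀ n : ℕ, ‖d n‖ * (r : ℝ) ^ n ≤ C), (r : ENNReal)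
/-- On the set `B n` of points whose nearest boundary point
is `a n`, the series converges and `liminf |(z - a n) f z| ≥ ‖c n‖ > 0` as
`z → a n` in `B n`. -/
theorem liminf_along_nearest_set
    (D : Set ℂ) (hDo : IsOpen D) (hDc : IsConnected D)
    (a : ℕ → ℂ) (ha_inj : Function.Injective a) (ha : ∀ j, a j ∈ frontier D)
    (n : ℕ) (B : Set ℂ)
    (hB : B = {z ∈ D | Metric.infDist z (frontier D) = dist z (a n)})
    (hBne : B.Nonempty) (haB : a n ∈ closure B)
    (c : ℕ → ℂ) (hcn : c n ≠ 0)
    (hpos : ∀ j, j ≠ n → 0 < Metric.infDist (a j) B)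
    (hsum : Summable fun j => if j = n then 0 else ‖c j‖ / Metric.infDist (a j) B) :
    (∀ z ∈ B, Summable fun j => c j / (z - a j)) ∧
    0 < ‖c n‖ ∧
    ‖c n‖ ≤ Filter.liminf
      (fun z => ‖(z - a n) * ∑' j, c j / (z - a j)‖) (nhdsWithin (a n) B) := by
  -- Basic facts for z ∈ B
  have hBD : ∀ z ∈ B, z ∈ D := by intro z hz; rw [hB] at hz; exact hz.1
  have hDa : ∀ j, a j ∉ D := by
    intro j hj
    have h1 := ha j
    rw [hDo.frontier_eq] at h1
    exact h1.2 hj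
  have hposz : ∀ z ∈ B, 0 < dist z (a n) := by
    intro z hz
    rw [hB] at hz
    rcases hz with ⟨hzD, heq⟩
    rw [← heq]
    refine (IsClosed.notMem_iff_infDist_pos isClosed_frontier ⟨a n, ha n⟩).mp ?_
    rw [hDo.frontier_eq]
    exact fun h => h.2 hzD
  have hne : ∀ z ∈ B, ∀ j, z - a j ≠ 0 := by
    intro z hz j h
    have h' : z = a j := by linear_combination h
    exact hDa j (h' ▸ hBD z hz)
  have hdistle : ∀ z ∈ B, ∀ j, j ≠ n → Metric.infDist (a j) B ≤ dist z (a j) := by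
    intro z hz j _
    rw [dist_comm]
    exact Metric.infDist_le_dist_of_mem hz
  have hnorm : ∀ z ∈ B, ∀ j, ‖c j / (z - a j)‖ = ‖c j‖ / dist z (a j) := by
    intro z hz j
    rw [norm_div, dist_eq_norm]
  have hbound : ∀ z ∈ B, ∀ j, j ≠ n →
      ‖c j / (z - a j)‖ ≤ ‖c j‖ / Metric.infDist (a j) B := by
    intro z hz j hj
    rw [hnorm z hz j]
    exact div_le_div_of_nonneg_left (norm_nonneg _) (hpos j hj) (hdistle z hz j hj)
  -- Summability of the tail (with index n zeroed out), in norm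
  have hsumE : ∀ z ∈ B, Summable fun j => ‖if j = n then 0 else c j / (z - a j)‖ := by
    intro z hz
    refine hsum.of_nonneg_of_le (fun j => norm_nonneg _) (fun j => ?_)
    by_cases hj : j = n
    · simp [hj]
    · simpa [hj] using hbound z hz j hj
  have hsumE' : ∀ z ∈ B, Summable fun j => if j = n then (0:ℂ) else c j / (z - a j) :=
    fun z hz => (hsumE z hz).of_norm
  -- Summability of the full series
  have hsummable : ∀ z ∈ B, Summable fun j => c j / (z - a j) := by
    intro z hz
    have hfin : Summable fun j => if j = n then c n / (z - a n) else (0:ℂ) := by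
      apply summable_of_ne_finset_zero (s := {n})
      intro b hb
      simp only [Finset.mem_singleton] at hb
      simp [hb]
    have := (hsumE' z hz).add hfin
    refine this.congr fun j => ?_
    by_cases hj : j = n <;> simp [hj]
  refine ⟨hsummable, norm_pos_iff.mpr hcn, ?_⟩
  -- the tail sum
  set S : ℝ := ∑' j, if j = n then 0 else ‖c j‖ / Metric.infDist (a j) B with hS
  have key : ∀ z ∈ B,
      |‖(z - a n) * ∑' j, c j / (z - a j)‖ - ‖c n‖| ≤ dist z (a n) * S := by
    intro z hz
    have hsplit : (∑' j, c j / (z - a j)) =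
        c n / (z - a n) + ∑' j, if j = n then 0 else c j / (z - a j) :=
      Summable.tsum_eq_add_tsum_ite (hsummable z hz) n
    set T : ℂ := ∑' j, if j = n then (0:ℂ) else c j / (z - a j) with hT
    have hzn := hne z hz n
    have hmul : (z - a n) * ∑' j, c j / (z - a j) = c n + (z - a n) * T := by
      rw [hsplit]; field_simp
    rw [hmul]
    have h1 : |‖c n + (z - a n) * T‖ - ‖c n‖| ≤ ‖(z - a n) * T‖ := by
      have := abs_norm_sub_norm_le (c n + (z - a n) * T) (c n)
      simpa using this
    refine h1.trans ?_
    rw [norm_mul, ← dist_eq_norm]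
    refine mul_le_mul_of_nonneg_left ?_ dist_nonneg
    calc ‖T‖ ≤ ∑' j, ‖if j = n then (0:ℂ) else c j / (z - a j)‖ :=
          norm_tsum_le_tsum_norm (hsumE z hz)
      _ ≤ S := by
          refine Summable.tsum_le_tsum (fun j => ?_) (hsumE z hz) hsum
          by_cases hj : j = n
          · simp [hj]
          · simpa [hj] using hbound z hz j hj
  -- tendsto
  have htend : Filter.Tendsto (fun z => ‖(z - a n) * ∑' j, c j / (z - a j)‖)
      (nhdsWithin (a n) B) (nhds ‖c n‖) := by
    rw [tendsto_iff_dist_tendsto_zero]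
    have hg : Filter.Tendsto (fun z => dist z (a n) * S) (nhdsWithin (a n) B) (nhds 0) := by
      have : Filter.Tendsto (fun z : ℂ => dist z (a n)) (nhdsWithin (a n) B) (nhds 0) := by
        have := (tendsto_nhdsWithin_of_tendsto_nhds (f := fun z : ℂ => dist z (a n))
          (s := B) (a := a n) ((continuous_id.dist continuous_const).tendsto (a n)))
        simpa using this
      simpa using this.mul_const S
    refine squeeze_zero' ?_ ?_ hg
    · exact Filter.Eventually.of_forall fun z => dist_nonneg
    · filter_upwards [self_mem_nhdsWithin] with z hz
      rw [Real.dist_eq]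
      exact key z hz
  haveI : (nhdsWithin (a n) B).NeBot := mem_closure_iff_nhdsWithin_neBot.mp haB
  exact htend.liminf_eq.ge
end

section
/- Let D ⊂ ℂ be a domain, f holomorphic on D, z₀ ∈ D, and a ∈ ∂D with |z₀ − a| = dist(z₀, ∂D). Suppose liminf |(z − a) f(z)| > 0 as z → a along the half-open segment [z₀, a) = {z₀ + t(a − z₀) : 0 ≤ t < 1} (which is contained in D). Then the radius of convergence of the Taylor series of f at z₀ is exactly dist(z₀, ∂D). -/
open Complex Metric MeasureTheory Filter Set

/-!
On the disc of radius `R = dist z₀ a = dist(z₀, ∂D)`, which lies in `D`, the Taylor series of `f`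
at `z₀` converges to `f`; hence its radius is at least `R`. If the radius were larger, the sum of
the series would be continuous at `a` and equal to `f` on the segment `[z₀, a)`, so
`(z - a) f z → 0` along that segment, contradicting the positive `liminf`.
-/

open Topology FormalMultilinearSeries Nat

theorem IsOpen.ball_infDist_frontier_subset {E : Type*} [NormedAddCommGroup E]
    [NormedSpace ℝ E] {D : Set E} (hD : IsOpen D) {z : E} (hz : z ∈ D) :
    ball z (infDist z (frontier D)) ⊆ D := by
  rcases lt_or_ge 0 (infDist z (frontier D)) with hpos | hnonpos
  · refine (convex_ball z _).isPreconnected.subset_of_closure_inter_subset hD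
      ⟨z, mem_ball_self hpos, hz⟩ fun y ⟨hyD, hy⟩ => ?_
    by_contra hy'
    exact (mem_ball'.1 hy).not_ge (infDist_le_dist_of_mem ⟨hyD, by rwa [hD.interior_eq]⟩)
  · simp [ball_eq_empty.2 hnonpos]

theorem image_Ico_subset_ball {E : Type*} [NormedAddCommGroup E] [NormedSpace ℝ E]
    {z₀ a : E} (ha : z₀ ≠ a) :
    (fun t : ℝ => z₀ + t • (a - z₀)) '' Ico 0 1 ⊆ ball z₀ (dist z₀ a) := by
  rintro _ ⟨t, ⟨ht₀, ht₁⟩, rfl⟩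
  rw [mem_ball, dist_eq_norm, add_sub_cancel_left, norm_smul, Real.norm_of_nonneg ht₀,
    dist_eq_norm']
  exact mul_lt_of_lt_one_left (norm_pos_iff.2 (sub_ne_zero.2 ha.symm)) ht₁

theorem nhdsWithin_image_Ico_neBot {E : Type*} [NormedAddCommGroup E] [NormedSpace ℝ E]
    (z₀ a : E) : (𝓝[(fun t : ℝ => z₀ + t • (a - z₀)) '' Ico 0 1] a).NeBot := by
  rw [← mem_closure_iff_nhdsWithin_neBot]
  refine image_closure_subset_closure_image (by fun_prop) ⟨1, ?_, by simp⟩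
  rw [closure_Ico zero_ne_one]
  exact right_mem_Icc.2 zero_le_one

theorem radiusOfConvergence_eq_radius_ofScalars (d : ℕ → ℂ) :
    radiusOfConvergence d = (ofScalars ℂ d).radius := by
  simp only [radiusOfConvergence, FormalMultilinearSeries.radius, ofScalars_norm, iSup_exists]

noncomputable def taylorSeriesAt (f : ℂ → ℂ) (z₀ : ℂ) : FormalMultilinearSeries ℂ ℂ ℂ :=
  ofScalars ℂ fun k => iteratedDeriv k f z₀ / (k ! : ℂ)

section Taylor

variable {f : ℂ → ℂ} {z₀ : ℂ} {r : ℝ}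

theorem hasSum_taylorSeriesAt (hf : DifferentiableOn ℂ f (ball z₀ r)) {z : ℂ}
    (hz : z ∈ ball z₀ r) :
    HasSum (fun n => taylorSeriesAt f z₀ n fun _ => z - z₀) (f z) := by
  have hterm : (fun n => taylorSeriesAt f z₀ n fun _ => z - z₀) =
      fun n => (n ! : ℂ)⁻¹ • (z - z₀) ^ n • iteratedDeriv n f z₀ := by
    ext n
    simp only [taylorSeriesAt, ofScalars_apply_eq, smul_eq_mul]
    ring
  exact hterm ▸ Complex.hasSum_taylorSeries_on_ball hf hz

theorem ofReal_le_radius_taylorSeriesAt (hf : DifferentiableOn ℂ f (ball z₀ r)) :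
    ENNReal.ofReal r ≤ (taylorSeriesAt f z₀).radius := by
  refine ENNReal.le_of_forall_nnreal_lt fun ρ hρ => ?_
  have hρ : z₀ + ρ ∈ ball z₀ r := by
    simpa using ENNReal.toReal_lt_of_lt_ofReal hρ
  refine (taylorSeriesAt f z₀).le_radius_of_tendsto (l := 0) ?_
  convert (hasSum_taylorSeriesAt hf hρ).summable.tendsto_atTop_zero.norm using 1
  · ext n
    simp [taylorSeriesAt, mul_comm]
  · simp

theorem radius_taylorSeriesAt_le_of_liminf_pos {a : ℂ} {s : Set ℂ} [(𝓝[s] a).NeBot]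
    (hf : DifferentiableOn ℂ f (ball z₀ (dist z₀ a))) (hs : s ⊆ ball z₀ (dist z₀ a))
    (hlim : 0 < liminf (fun z => ‖(z - a) * f z‖) (𝓝[s] a)) :
    (taylorSeriesAt f z₀).radius ≤ edist z₀ a := by
  set p := taylorSeriesAt f z₀
  by_contra! ha
  have hcont : ContinuousAt (fun z => p.sum (z - z₀)) a := by
    have hmem : a - z₀ ∈ eball (0 : ℂ) p.radius := by
      rwa [mem_eball, edist_comm, ← sub_self z₀, edist_sub_right]
    exact (p.continuousOn.continuousAt (isOpen_eball.mem_nhds hmem)).comp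
      (f := fun z => z - z₀) (by fun_prop)
  have hfg : EqOn f (fun z => p.sum (z - z₀)) s := fun z hz =>
    (hasSum_taylorSeriesAt hf (hs hz)).tsum_eq.symm
  have htend : Tendsto (fun z => ‖(z - a) * f z‖) (𝓝[s] a) (𝓝 0) := by
    have hlim0 : Tendsto (fun z => ‖(z - a) * p.sum (z - z₀)‖) (𝓝 a) (𝓝 0) := by
      have hlin : ContinuousAt (fun z : ℂ => z - a) a := by fun_prop
      simpa using (hlin.mul hcont).norm.tendsto
    exact (hlim0.mono_left nhdsWithin_le_nhds).congr'
      (eventually_nhdsWithin_of_forall fun z hz => by simp only [hfg hz])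
  exact hlim.ne' htend.liminf_eq

end Taylor

theorem radius_eq_dist_of_liminf_pos_general
    (D : Set ℂ) (hDo : IsOpen D)
    (f : ℂ → ℂ) (hf : DifferentiableOn ℂ f D)
    (z₀ : ℂ) (hz₀ : z₀ ∈ D) (a : ℂ) (ha : a ∈ frontier D)
    (hd : dist z₀ a = Metric.infDist z₀ (frontier D))
    (hlim : 0 < Filter.liminf (fun z => ‖(z - a) * f z‖)
      (nhdsWithin a ((fun t : ℝ => z₀ + t • (a - z₀)) '' Set.Ico 0 1))) :
    radiusOfConvergence (fun k => iteratedDeriv k f z₀ / (k.factorial : ℂ)) =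
      ENNReal.ofReal (Metric.infDist z₀ (frontier D)) := by
  have hz₀a : z₀ ≠ a := fun h => (hDo.frontier_eq ▸ ha).2 (h ▸ hz₀)
  have hfball : DifferentiableOn ℂ f (ball z₀ (dist z₀ a)) :=
    hf.mono (hd ▸ hDo.ball_infDist_frontier_subset hz₀)
  have := nhdsWithin_image_Ico_neBot z₀ a
  rw [radiusOfConvergence_eq_radius_ofScalars, ← hd]
  refine le_antisymm ?_ (ofReal_le_radius_taylorSeriesAt hfball)
  rw [← edist_dist]
  exact radius_taylorSeriesAt_le_of_liminf_pos hfball (image_Ico_subset_ball hz₀a) hlim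

/-- If `liminf |(z - a) f z| > 0` along the segment from
`z₀` to a nearest boundary point `a`, then the radius of convergence of the
Taylor series of `f` at `z₀` is exactly `dist(z₀, ∂D)`. -/
theorem radius_eq_dist_of_liminf_pos
    (D : Set ℂ) (hDo : IsOpen D) (hDc : IsConnected D)
    (f : ℂ → ℂ) (hf : DifferentiableOn ℂ f D)
    (z₀ : ℂ) (hz₀ : z₀ ∈ D) (a : ℂ) (ha : a ∈ frontier D)
    (hd : dist z₀ a = Metric.infDist z₀ (frontier D))
    (hlim : 0 < Filter.liminf (fun z => ‖(z - a) * f z‖)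
      (nhdsWithin a ((fun t : ℝ => z₀ + t • (a - z₀)) '' Set.Ico 0 1))) :
    radiusOfConvergence (fun k => iteratedDeriv k f z₀ / (k.factorial : ℂ)) =
      ENNReal.ofReal (Metric.infDist z₀ (frontier D)) :=
  radius_eq_dist_of_liminf_pos_general D hDo f hf z₀ hz₀ a ha hd hlim
end

section
/- Let m ∈ ℕ and let g be holomorphic on the unit disc 𝔻 with g(e^{2πi/m} z) = g(z) for all z ∈ 𝔻. If g extends holomorphically across a point b ∈ ∂𝔻 (i.e., there exist an open neighborhood V of b and a holomorphic h on V with h = g on V ∩ 𝔻), then g extends holomorphically across e^{2πi/m} b. Consequently, if g fails to extend holomorphically across at least one point of ∂𝔻, then every closed arc of ∂𝔻 of length greater than 2π/m contains a point across which g does not extend. -/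
open Complex Metric MeasureTheory Filter Set

/-! Multiplication by `ω = exp (2πi/m)` is a biholomorphism of `ℂ` preserving `𝔻` and `g`, so it
carries a local extension of `g` at `b` to one at `ω b`; the same holds for `ω⁻¹`, so the points
across which `g` extends are invariant under every `ω ^ n`, `n : ℤ`. Reducing the argument of `b`
modulo `2π/m` into `[α, α + 2π/m)` puts some `ω ^ n b` on any closed arc of length `> 2π/m`. -/

open scoped Pointwise

section

variable {f f' : ℂ → ℂ} {D : Set ℂ} {b ω : ℂ}

theorem apply_inv_mul_eq_of_smul_set_eq (hω : ω ≠ 0) (hD : ω • D = D)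
    (hf : ∀ z ∈ D, f (ω * z) = f z) : ∀ z ∈ D, f (ω⁻¹ * z) = f z := by
  intro z hz
  rw [← hD, mem_smul_set_iff_inv_smul_mem₀ hω] at hz
  simpa [mul_inv_cancel_left₀ hω] using (hf _ hz).symm

namespace ExtendsAcross

theorem congr (h : ExtendsAcross f D b) (hff' : EqOn f f' D) : ExtendsAcross f' D b := by
  obtain ⟨V, hV, hbV, h, hh, z₀, hz₀, heq⟩ := h
  refine ⟨V, hV, hbV, h, hh, z₀, hz₀, fun z hz => ?_⟩
  rw [← hff' (connectedComponentIn_subset _ _ hz).2, heq hz]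

theorem image_homeomorph (h : ExtendsAcross f D b) (e : ℂ ≃ₜ ℂ)
    (he : Differentiable ℂ e.symm) : ExtendsAcross (f ∘ e.symm) (e '' D) (e b) := by
  obtain ⟨V, hV, hbV, h, hh, z₀, hz₀, heq⟩ := h
  refine ⟨e '' V, e.isOpenMap V hV, mem_image_of_mem e hbV, h ∘ e.symm,
    hh.comp he.differentiableOn ?_, e z₀, ?_, ?_⟩
  · rintro _ ⟨z, hz, rfl⟩
    simpa using hz
  · rw [← image_inter e.injective]
    exact mem_image_of_mem e hz₀
  · rw [← image_inter e.injective, ← e.image_connectedComponentIn hz₀]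
    rintro _ ⟨z, hz, rfl⟩
    simpa using heq hz

theorem mul_of_forall_mul_eq (h : ExtendsAcross f D b) (hω : ω ≠ 0) (hD : ω • D = D)
    (hf : ∀ z ∈ D, f (ω * z) = f z) : ExtendsAcross f D (ω * b) := by
  have hext := h.image_homeomorph (Homeomorph.mulLeft₀ ω hω)
    (by simpa using differentiable_id.const_mul ω⁻¹)
  rw [show Homeomorph.mulLeft₀ ω hω '' D = D from image_smul.trans hD] at hext
  exact hext.congr fun z hz => by simpa using apply_inv_mul_eq_of_smul_set_eq hω hD hf z hz

theorem zpow_mul_of_forall_mul_eq (h : ExtendsAcross f D b) (hω : ω ≠ 0) (hD : ω • D = D)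
    (hf : ∀ z ∈ D, f (ω * z) = f z) (k : ℤ) : ExtendsAcross f D (ω ^ k * b) := by
  have hD' : ω⁻¹ • D = D := by
    calc ω⁻¹ • D = ω⁻¹ • ω • D := by rw [hD]
      _ = D := inv_smul_smul₀ hω D
  induction k with
  | zero => simpa using h
  | succ k ih =>
    simpa [zpow_add_one₀ hω, mul_comm, mul_left_comm] using ih.mul_of_forall_mul_eq hω hD hf
  | pred k ih =>
    simpa [zpow_sub_one₀ hω, mul_comm, mul_left_comm] using
      ih.mul_of_forall_mul_eq (inv_ne_zero hω) hD' (apply_inv_mul_eq_of_smul_set_eq hω hD hf)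

end ExtendsAcross

end

theorem rotation_invariant_extension_general
    (m : ℕ) (hm : 0 < m) (g : ℂ → ℂ)
    (hrot : ∀ z ∈ ball (0:ℂ) 1,
      g (Complex.exp ((2 * Real.pi / (m:ℝ) : ℝ) * Complex.I) * z) = g z) :
    (∀ b ∈ sphere (0:ℂ) 1, ExtendsAcross g (ball (0:ℂ) 1) b →
      ExtendsAcross g (ball (0:ℂ) 1)
        (Complex.exp ((2 * Real.pi / (m:ℝ) : ℝ) * Complex.I) * b)) ∧
    ((∃ b ∈ sphere (0:ℂ) 1, ¬ ExtendsAcross g (ball (0:ℂ) 1) b) →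
      ∀ α β : ℝ, 2 * Real.pi / (m:ℝ) < β - α →
        ∃ θ ∈ Set.Icc α β,
          ¬ ExtendsAcross g (ball (0:ℂ) 1) (Complex.exp ((θ:ℝ) * Complex.I))) := by
  set c : ℝ := 2 * Real.pi / m
  have hω : exp (c * I) ≠ 0 := exp_ne_zero _
  have hD : exp (c * I) • ball (0:ℂ) 1 = ball 0 1 := by
    rw [smul_unitBall hω, norm_exp_ofReal_mul_I]
  refine ⟨fun b _ hb => hb.mul_of_forall_mul_eq hω hD hrot, ?_⟩
  rintro ⟨b, hb, hnb⟩ α β hαβ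
  obtain ⟨φ, rfl⟩ := (norm_eq_one_iff b).1 (mem_sphere_zero_iff_norm.1 hb)
  have hc : 0 < c := by positivity
  have hθ := toIcoMod_mem_Ico hc α φ
  have hφ := toIcoMod_add_toIcoDiv_zsmul hc α φ
  generalize toIcoMod hc α φ = θ, toIcoDiv hc α φ = n at hθ hφ
  subst hφ
  have hrotate : exp ((θ + n • c : ℝ) * I) = exp (c * I) ^ n * exp (θ * I) := by
    rw [← exp_int_mul, ← exp_add]
    push_cast
    ring_nf
  refine ⟨θ, Ico_subset_Icc_self.trans (Icc_subset_Icc_right (by linarith)) hθ, fun hθext => ?_⟩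
  exact hnb (hrotate ▸ hθext.zpow_mul_of_forall_mul_eq hω hD hrot n)

/-- A rotation-invariant holomorphic function on `𝔻` that
extends across `b ∈ ∂𝔻` also extends across the rotated point; hence if it
fails to extend somewhere, every closed arc of length `> 2π/m` contains a
point across which it does not extend. -/
theorem rotation_invariant_extension
    (m : ℕ) (hm : 0 < m) (g : ℂ → ℂ)
    (hg : DifferentiableOn ℂ g (ball (0:ℂ) 1))
    (hrot : ∀ z ∈ ball (0:ℂ) 1,
      g (Complex.exp ((2 * Real.pi / (m:ℝ) : ℝ) * Complex.I) * z) = g z) :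
    (∀ b ∈ sphere (0:ℂ) 1, ExtendsAcross g (ball (0:ℂ) 1) b →
      ExtendsAcross g (ball (0:ℂ) 1)
        (Complex.exp ((2 * Real.pi / (m:ℝ) : ℝ) * Complex.I) * b)) ∧
    ((∃ b ∈ sphere (0:ℂ) 1, ¬ ExtendsAcross g (ball (0:ℂ) 1) b) →
      ∀ α β : ℝ, 2 * Real.pi / (m:ℝ) < β - α →
        ∃ θ ∈ Set.Icc α β,
          ¬ ExtendsAcross g (ball (0:ℂ) 1) (Complex.exp ((θ:ℝ) * Complex.I))) :=
  rotation_invariant_extension_general m hm g hrot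
end
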